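/- arXiv:1602.02993 — 4 statements merged into one kernel-verified Lean document; each statement's English description precedes it below -/
import Mathlib

section
/- For any positive function δ on a closed interval [b,c] with b < c, there exist finitely many points b ≤ x₁ < x₂ < ⋯ < xₙ ≤ c such that every point x ∈ [b,c] lies in at least one open interval (xⱼ - δ(xⱼ), xⱼ + δ(xⱼ)); moreover the points can be chosen so that each point of [b,c] lies in at most two of these open intervals. -/
open Set

/-- If two intervals both contain `t`, one extending at least as far left and one at least as
far right as a third interval containing `t`, then the third is contained in their union. -/
private lemma ioo_subset_union {δ : ℝ → ℝ} {a m y t : ℝ}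
    (hta : t ∈ Set.Ioo (a - δ a) (a + δ a)) (htm : t ∈ Set.Ioo (m - δ m) (m + δ m))
    (hL : a - δ a ≤ y - δ y) (hR : y + δ y ≤ m + δ m) :
    Set.Ioo (y - δ y) (y + δ y) ⊆
      Set.Ioo (a - δ a) (a + δ a) ∪ Set.Ioo (m - δ m) (m + δ m) := by
  intro z hz
  by_cases h : z < a + δ a
  · exact Or.inl ⟨lt_of_le_of_lt hL hz.1, h⟩
  · exact Or.inr ⟨lt_trans htm.1 (lt_of_lt_of_le hta.2 (not_lt.mp h)),
      lt_of_lt_of_le hz.2 hR⟩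

/-- **Cousin's covering lemma.** For any positive function `δ` on `[b,c]` with `b < c`, there
are finitely many points `b ≤ x₁ < ⋯ < xₙ ≤ c` whose `δ`-intervals cover `[b,c]`, and they can
be chosen so that each point of `[b,c]` lies in at most two of the open intervals. -/
theorem cousin_cover (b c : ℝ) (hbc : b < c) (δ : ℝ → ℝ)
    (hδ : ∀ x ∈ Set.Icc b c, 0 < δ x) :
    ∃ (n : ℕ) (x : Fin (n + 1) → ℝ), StrictMono x ∧
      (∀ i, x i ∈ Set.Icc b c) ∧
      (∀ t ∈ Set.Icc b c, ∃ i, t ∈ Set.Ioo (x i - δ (x i)) (x i + δ (x i))) ∧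
      (∀ t ∈ Set.Icc b c,
        {i | t ∈ Set.Ioo (x i - δ (x i)) (x i + δ (x i))}.ncard ≤ 2) := by
  set I : ℝ → Set ℝ := fun x => Set.Ioo (x - δ x) (x + δ x) with hI
  -- a finite subcover exists
  have hcov0 : Set.Icc b c ⊆ ⋃ x ∈ Set.Icc b c, I x := by
    intro t ht
    refine Set.mem_iUnion₂.mpr ⟨t, ht, ?_⟩
    have := hδ t ht
    constructor <;> linarith
  obtain ⟨S, hSsub, hSfin, hScov⟩ :=
    isCompact_Icc.elim_finite_subcover_image (fun x _ => isOpen_Ioo) hcov0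
  -- the predicate: a cover of given cardinality
  set P : ℕ → Prop := fun n => ∃ s : Finset ℝ, s.card = n ∧ ↑s ⊆ Set.Icc b c ∧
    Set.Icc b c ⊆ ⋃ x ∈ (s : Set ℝ), I x with hP
  have hPex : ∃ n, P n := ⟨hSfin.toFinset.card, hSfin.toFinset, rfl,
    by simpa using hSsub, by simpa using hScov⟩
  classical
  obtain ⟨s, hcard, hssub, hscov⟩ := Nat.find_spec hPex
  -- minimal cover: no point lies in three of the intervals
  have key : ∀ t : ℝ, ∀ i ∈ s, ∀ j ∈ s, ∀ k ∈ s,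
      t ∈ I i → t ∈ I j → t ∈ I k → i = j ∨ i = k ∨ j = k := by
    intro t i hi j hj k hk hti htj htk
    by_contra hcon
    push_neg at hcon
    obtain ⟨hij, hik, hjk⟩ := hcon
    set T : Finset ℝ := {i, j, k} with hT
    have hTmem : ∀ w ∈ T, t ∈ I w ∧ w ∈ s := by
      intro w hw
      simp only [hT, Finset.mem_insert, Finset.mem_singleton] at hw
      rcases hw with rfl | rfl | rfl <;> exact ⟨by assumption, by assumption⟩
    have hTne : T.Nonempty := ⟨i, by simp [hT]⟩
    obtain ⟨a, haT, ha⟩ := T.exists_min_image (fun w => w - δ w) hTne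
    obtain ⟨m, hmT, hm⟩ := T.exists_max_image (fun w => w + δ w) hTne
    have hTcard : T.card = 3 := by
      rw [hT]
      rw [Finset.card_insert_of_notMem (by simp [hij, hik]),
        Finset.card_insert_of_notMem (by simp [hjk])]
      simp
    -- pick a third point
    have hys : (T \ {a, m}).Nonempty := by
      rw [← Finset.card_pos]
      have h1 : ({a, m} : Finset ℝ).card ≤ 2 := Finset.card_insert_le _ _ |>.trans (by simp)
      have h2 := Finset.card_sdiff_add_card_eq_card
        (Finset.insert_subset_iff.mpr ⟨haT, Finset.singleton_subset_iff.mpr hmT⟩)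
      omega
    obtain ⟨y, hy⟩ := hys
    rw [Finset.mem_sdiff] at hy
    obtain ⟨hyT, hyam⟩ := hy
    have hya : y ≠ a := fun h => hyam (by simp [h])
    have hym : y ≠ m := fun h => hyam (by simp [h])
    -- the interval at y is redundant
    have hsubu : I y ⊆ I a ∪ I m :=
      ioo_subset_union (hTmem a haT).1 (hTmem m hmT).1 (ha y hyT) (hm y hyT)
    -- so erasing y still gives a cover, contradicting minimality
    have hys' : y ∈ s := (hTmem y hyT).2
    have hP' : P (s.card - 1) := by
      refine ⟨s.erase y, by rw [Finset.card_erase_of_mem hys'], ?_, ?_⟩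
      · exact fun w hw => hssub (Finset.erase_subset _ _ (by exact_mod_cast hw))
      · intro u hu
        obtain ⟨w, hw, hwu⟩ := Set.mem_iUnion₂.mp (hscov hu)
        rcases eq_or_ne w y with rfl | hwy
        · rcases hsubu hwu with h | h
          · refine Set.mem_iUnion₂.mpr ⟨a, ?_, h⟩
            exact Finset.mem_coe.mpr (Finset.mem_erase.mpr ⟨hya.symm, (hTmem a haT).2⟩)
          · refine Set.mem_iUnion₂.mpr ⟨m, ?_, h⟩
            exact Finset.mem_coe.mpr (Finset.mem_erase.mpr ⟨hym.symm, (hTmem m hmT).2⟩)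
        · refine Set.mem_iUnion₂.mpr ⟨w, ?_, hwu⟩
          exact Finset.mem_coe.mpr (Finset.mem_erase.mpr ⟨hwy, by exact_mod_cast hw⟩)
    have hpos : 0 < s.card := Finset.card_pos.mpr ⟨y, hys'⟩
    exact Nat.find_min hPex (by omega) hP'
  -- s is nonempty
  have hsne : s.Nonempty := by
    obtain ⟨w, hw, -⟩ := Set.mem_iUnion₂.mp (hscov ⟨le_refl b, hbc.le⟩)
    exact ⟨w, by exact_mod_cast hw⟩
  obtain ⟨n, hn⟩ : ∃ n, s.card = n + 1 :=
    ⟨s.card - 1, by have := Finset.card_pos.mpr hsne; omega⟩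
  set x : Fin (n + 1) → ℝ := fun i => s.orderEmbOfFin hn i with hx
  have hxmem : ∀ i, x i ∈ s := fun i => s.orderEmbOfFin_mem hn i
  refine ⟨n, x, ?_, fun i => hssub (hxmem i), ?_, ?_⟩
  · exact (s.orderEmbOfFin hn).strictMono
  · intro t ht
    obtain ⟨w, hw, hwt⟩ := Set.mem_iUnion₂.mp (hscov ht)
    have : w ∈ Set.range x := by rw [hx]; rw [Finset.range_orderEmbOfFin]; exact hw
    obtain ⟨i, rfl⟩ := this
    exact ⟨i, hwt⟩
  · intro t ht
    by_contra hlt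
    push_neg at hlt
    have hfin : {i | t ∈ Set.Ioo (x i - δ (x i)) (x i + δ (x i))}.Finite :=
      Set.toFinite _
    rw [Set.two_lt_ncard hfin] at hlt
    obtain ⟨i, hi, j, hj, k, hk, hij, hik, hjk⟩ := hlt
    have hinj : Function.Injective x := (s.orderEmbOfFin hn).injective
    rcases key t (x i) (hxmem i) (x j) (hxmem j) (x k) (hxmem k) hi hj hk with
      h | h | h
    · exact hij (hinj h)
    · exact hik (hinj h)
    · exact hjk (hinj h)
end

section
/- If a function F : [b,c] → ℝ is continuous on [b,c] and differentiable on (b,c) with F'(x) = f(x), then f is Henstock–Kurzweil integrable on [b,c] with integral F(c) − F(b). -/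
open Set Filter

/-- A tagged division of the compact interval `[a,b]`: partition points
`a = t 0 ≤ t 1 ≤ ⋯ ≤ t n = b` with a tag in each subinterval. -/
structure TaggedDiv1 (a b : ℝ) where
  n : ℕ
  t : Fin (n + 1) → ℝ
  tag : Fin n → ℝ
  mono : Monotone t
  first : t 0 = a
  last : t (Fin.last n) = b
  tag_mem : ∀ i : Fin n, tag i ∈ Set.Icc (t i.castSucc) (t i.succ)

/-- A tagged division is compatible with the gauge `δ` if each subinterval lies in the
open interval of radius `δ` about its tag. -/
def Compat1 {a b : ℝ} (D : TaggedDiv1 a b) (δ : ℝ → ℝ) : Prop :=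
  ∀ i : Fin D.n, Set.Icc (D.t i.castSucc) (D.t i.succ) ⊆
    Set.Ioo (D.tag i - δ (D.tag i)) (D.tag i + δ (D.tag i))

/-- The Riemann sum of `f` over a tagged division of `[a,b]`. -/
noncomputable def riemannSum1 {a b : ℝ} (f : ℝ → ℝ) (D : TaggedDiv1 a b) : ℝ :=
  ∑ i : Fin D.n, f (D.tag i) * (D.t i.succ - D.t i.castSucc)

/-- `f` has Henstock–Kurzweil integral `A` on `[a,b]`. -/
def HasHK1 (f : ℝ → ℝ) (a b A : ℝ) : Prop :=
  ∀ ε > 0, ∃ δ : ℝ → ℝ, (∀ x ∈ Set.Icc a b, 0 < δ x) ∧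
    ∀ D : TaggedDiv1 a b, Compat1 D δ → |riemannSum1 f D - A| < ε

/-!
The error `f x (v - u) - (F v - F u)` of a tagged subinterval `[u, v] ∋ x` is bounded by the
increment `G v - G u` of a single function `G`, so the errors of a division telescope to at most
`G c - G b`. At an interior tag the straddle lemma gives the bound `ε₁ (v - u)`. At an endpoint
only continuity is available, and the error is merely small; but at most one nondegenerate
subinterval is tagged at `b` (it starts at `b`) and at most one at `c` (it ends at `c`), so a jump
of `G` of size `ε₂` just after `b` and at `c` absorbs it.
-/

namespace TaggedDiv1

variable {a b : ℝ} (D : TaggedDiv1 a b)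

lemma sum_sub_telescope (g : Fin (D.n + 1) → ℝ) :
    ∑ i : Fin D.n, (g i.succ - g i.castSucc) = g (Fin.last D.n) - g 0 := by
  have hsucc := Fin.sum_univ_succ g
  have hcastSucc := Fin.sum_univ_castSucc g
  rw [Finset.sum_sub_distrib]
  linarith

lemma t_mem_Icc (i : Fin (D.n + 1)) : D.t i ∈ Icc a b :=
  ⟨D.first.symm.le.trans (D.mono (Fin.zero_le i)), (D.mono (Fin.le_last i)).trans D.last.le⟩

lemma tag_mem_Icc (i : Fin D.n) : D.tag i ∈ Icc a b :=
  ⟨(D.t_mem_Icc _).1.trans (D.tag_mem i).1, (D.tag_mem i).2.trans (D.t_mem_Icc _).2⟩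

lemma abs_riemannSum1_sub_le {f F G : ℝ → ℝ}
    (h : ∀ i : Fin D.n, |f (D.tag i) * (D.t i.succ - D.t i.castSucc) -
      (F (D.t i.succ) - F (D.t i.castSucc))| ≤ G (D.t i.succ) - G (D.t i.castSucc)) :
    |riemannSum1 f D - (F b - F a)| ≤ G b - G a := by
  have hF := D.sum_sub_telescope (F ∘ D.t)
  have hG := D.sum_sub_telescope (G ∘ D.t)
  simp only [Function.comp_apply, D.first, D.last] at hF hG
  rw [riemannSum1, ← hF, ← hG, ← Finset.sum_sub_distrib]
  exact (Finset.abs_sum_le_sum_abs _ _).trans (Finset.sum_le_sum fun i _ => h i)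

end TaggedDiv1

theorem hasHK1_of_locally_dominated {f F : ℝ → ℝ} {a b : ℝ}
    (h : ∀ ε > 0, ∃ G : ℝ → ℝ, G b - G a < ε ∧ ∀ x ∈ Icc a b, ∃ d > 0, ∀ u v,
      a ≤ u → u ≤ x → x ≤ v → v ≤ b → x - d < u → v < x + d →
        |f x * (v - u) - (F v - F u)| ≤ G v - G u) :
    HasHK1 f a b (F b - F a) := by
  intro ε hε
  obtain ⟨G, hGε, hG⟩ := h ε hε
  have hloc : ∀ x, ∃ d > 0, x ∈ Icc a b → ∀ u v,
      a ≤ u → u ≤ x → x ≤ v → v ≤ b → x - d < u → v < x + d →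
        |f x * (v - u) - (F v - F u)| ≤ G v - G u := by
    intro x
    by_cases hx : x ∈ Icc a b
    · obtain ⟨d, hd, hdx⟩ := hG x hx
      exact ⟨d, hd, fun _ => hdx⟩
    · exact ⟨1, one_pos, fun hx' => absurd hx' hx⟩
  choose δ hδ hδG using hloc
  refine ⟨δ, fun x _ => hδ x, fun D hD => ?_⟩
  refine (D.abs_riemannSum1_sub_le fun i => ?_).trans_lt hGε
  have hle := (D.tag_mem i).1.trans (D.tag_mem i).2
  exact hδG _ (D.tag_mem_Icc i) _ _ (D.t_mem_Icc _).1 (D.tag_mem i).1 (D.tag_mem i).2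
    (D.t_mem_Icc _).2 (hD i ⟨le_rfl, hle⟩).1 (hD i ⟨hle, le_rfl⟩).2

theorem HasDerivAt.exists_abs_sub_le_mul {F : ℝ → ℝ} {f' x ε : ℝ} (hF : HasDerivAt F f' x)
    (hε : 0 < ε) : ∃ d > 0, ∀ u v, u ≤ x → x ≤ v → x - d < u → v < x + d →
      |f' * (v - u) - (F v - F u)| ≤ ε * (v - u) := by
  obtain ⟨d, hd, hball⟩ :=
    Metric.eventually_nhds_iff.1 ((hasDerivAt_iff_isLittleO.1 hF).def hε)
  have hnear : ∀ y, |y - x| < d → |F y - F x - (y - x) * f'| ≤ ε * |y - x| := fun y hy => by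
    simpa only [Real.norm_eq_abs, smul_eq_mul] using hball (by rwa [Real.dist_eq])
  refine ⟨d, hd, fun u v hux hxv hu hv => ?_⟩
  have hleft := hnear u (by rw [abs_of_nonpos (by linarith)]; linarith)
  have hright := hnear v (by rw [abs_of_nonneg (by linarith)]; linarith)
  rw [abs_of_nonpos (sub_nonpos.2 hux)] at hleft
  rw [abs_of_nonneg (sub_nonneg.2 hxv)] at hright
  calc |f' * (v - u) - (F v - F u)|
      = |(F u - F x - (u - x) * f') - (F v - F x - (v - x) * f')| := by ring_nf
    _ ≤ |F u - F x - (u - x) * f'| + |F v - F x - (v - x) * f'| := abs_sub _ _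
    _ ≤ ε * -(u - x) + ε * (v - x) := add_le_add hleft hright
    _ = ε * (v - u) := by ring

theorem ContinuousWithinAt.exists_abs_linear_sub_lt {F : ℝ → ℝ} {s : Set ℝ} {x : ℝ}
    (hF : ContinuousWithinAt F s x) (y : ℝ) {ε : ℝ} (hε : 0 < ε) :
    ∃ d > 0, ∀ w ∈ s, |w - x| < d → |y * (w - x) - (F w - F x)| < ε := by
  have hg : ContinuousWithinAt (fun w => y * (w - x) - (F w - F x)) s x :=
    (continuousWithinAt_const.mul (continuousWithinAt_id.sub continuousWithinAt_const)).sub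
      (hF.sub continuousWithinAt_const)
  obtain ⟨d, hd, hdg⟩ := Metric.continuousWithinAt_iff.1 hg ε hε
  refine ⟨d, hd, fun w hw hwx => ?_⟩
  simpa [Real.dist_eq] using hdg hw (by rwa [Real.dist_eq])

noncomputable def ftcMajorant (b c ε₁ ε₂ y : ℝ) : ℝ :=
  ε₁ * y + (if b < y then ε₂ else 0) + (if c ≤ y then ε₂ else 0)

section ftcMajorant

variable {b c ε₁ ε₂ u v : ℝ}

lemma mul_sub_le_ftcMajorant_sub (h₂ : 0 ≤ ε₂) (huv : u ≤ v) :
    ε₁ * (v - u) ≤ ftcMajorant b c ε₁ ε₂ v - ftcMajorant b c ε₁ ε₂ u := by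
  simp only [ftcMajorant]
  split_ifs <;> nlinarith

lemma le_ftcMajorant_sub_of_le_of_lt (h₁ : 0 ≤ ε₁) (h₂ : 0 ≤ ε₂) (hub : u ≤ b) (hbv : b < v) :
    ε₂ ≤ ftcMajorant b c ε₁ ε₂ v - ftcMajorant b c ε₁ ε₂ u := by
  simp only [ftcMajorant]
  split_ifs <;> nlinarith

lemma le_ftcMajorant_sub_of_lt_of_le (h₁ : 0 ≤ ε₁) (h₂ : 0 ≤ ε₂) (huc : u < c) (hcv : c ≤ v) :
    ε₂ ≤ ftcMajorant b c ε₁ ε₂ v - ftcMajorant b c ε₁ ε₂ u := by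
  simp only [ftcMajorant]
  split_ifs <;> nlinarith

lemma ftcMajorant_sub_eq (hbc : b < c) :
    ftcMajorant b c ε₁ ε₂ c - ftcMajorant b c ε₁ ε₂ b = ε₁ * (c - b) + 2 * ε₂ := by
  simp only [ftcMajorant, hbc, hbc.not_ge, lt_irrefl, le_refl, if_true, if_false]
  ring

end ftcMajorant

lemma exists_abs_sub_le_ftcMajorant_sub {b c : ℝ} {F f : ℝ → ℝ}
    (hcont : ContinuousOn F (Icc b c)) (hderiv : ∀ x ∈ Ioo b c, HasDerivAt F (f x) x)
    {ε₁ ε₂ : ℝ} (h₁ : 0 < ε₁) (h₂ : 0 < ε₂) {x : ℝ} (hx : x ∈ Icc b c) :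
    ∃ d > 0, ∀ u v, b ≤ u → u ≤ x → x ≤ v → v ≤ c → x - d < u → v < x + d →
      |f x * (v - u) - (F v - F u)| ≤ ftcMajorant b c ε₁ ε₂ v - ftcMajorant b c ε₁ ε₂ u := by
  rcases hx.1.eq_or_lt with rfl | hbx
  · obtain ⟨d, hd, hdF⟩ := (hcont b hx).exists_abs_linear_sub_lt (f b) h₂
    refine ⟨d, hd, fun u v hbu hub hbv hvc _ hv => ?_⟩
    obtain rfl : u = b := le_antisymm hub hbu
    rcases hbv.eq_or_lt with rfl | hbv
    · simp
    have hsmall := hdF v ⟨hbv.le, hvc⟩ (by rw [abs_of_pos (sub_pos.2 hbv)]; linarith)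
    exact hsmall.le.trans (le_ftcMajorant_sub_of_le_of_lt h₁.le h₂.le le_rfl hbv)
  rcases hx.2.eq_or_lt with rfl | hxc
  · obtain ⟨d, hd, hdF⟩ := (hcont x hx).exists_abs_linear_sub_lt (f x) h₂
    refine ⟨d, hd, fun u v hbu hux hxv hvx hu _ => ?_⟩
    obtain rfl : v = x := le_antisymm hvx hxv
    rcases hux.eq_or_lt with rfl | hux
    · simp
    have hsmall := hdF u ⟨hbu, hux.le⟩ (by rw [abs_of_neg (sub_neg.2 hux)]; linarith)
    rw [show f v * (v - u) - (F v - F u) = -(f v * (u - v) - (F u - F v)) by ring, abs_neg]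
    exact hsmall.le.trans (le_ftcMajorant_sub_of_lt_of_le h₁.le h₂.le hux le_rfl)
  obtain ⟨d, hd, hdF⟩ := (hderiv x ⟨hbx, hxc⟩).exists_abs_sub_le_mul h₁
  exact ⟨d, hd, fun u v _ hux hxv _ hu hv => (hdF u v hux hxv hu hv).trans
    (mul_sub_le_ftcMajorant_sub h₂.le (hux.trans hxv))⟩

/-- If `F` is continuous on `[b,c]` and `F' = f` on `(b,c)`, then `f` is
Henstock–Kurzweil integrable on `[b,c]` with integral `F c - F b`. -/
theorem ftc_hk (b c : ℝ) (hbc : b < c) (F f : ℝ → ℝ)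
    (hcont : ContinuousOn F (Set.Icc b c))
    (hderiv : ∀ x ∈ Set.Ioo b c, HasDerivAt F (f x) x) :
    HasHK1 f b c (F c - F b) := by
  refine hasHK1_of_locally_dominated fun ε hε => ?_
  have hcb : 0 < c - b := sub_pos.2 hbc
  refine ⟨ftcMajorant b c (ε / (2 * (c - b))) (ε / 8), ?_, fun x hx =>
    exists_abs_sub_le_ftcMajorant_sub hcont hderiv (by positivity) (by positivity) hx⟩
  rw [ftcMajorant_sub_eq hbc]
  field_simp
  linarith
end

section
/- (Henstock's Lemma / Saks–Henstock) Let f be Henstock–Kurzweil integrable on a brick I with indefinite integral F(J) = ∫_J f dμ. Given ε > 0, let δ be a gauge on I such that every δ-compatible tagged division 𝒟 of I satisfies |∑ f(P)μ(J) − F(I)| < ε. Then for every sub-collection (partial division) of such a 𝒟, |∑ (f(Pⱼ)μ(Jⱼ) − F(Jⱼ))| ≤ ε, and moreover ∑_{(J,P)∈𝒟} |f(P)μ(J) − F(J)| ≤ 4ε. -/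
open Set Filter

/-- A brick (compact non-degenerate interval) in `ι → ℝ`. -/
structure Brick (ι : Type*) [Fintype ι] where
  lower : ι → ℝ
  upper : ι → ℝ
  lt : ∀ j, lower j < upper j

variable {ι : Type*} [Fintype ι]

namespace Brick

/-- The underlying closed set of a brick. -/
def toSet (I : Brick ι) : Set (ι → ℝ) := {x | ∀ j, x j ∈ Set.Icc (I.lower j) (I.upper j)}

/-- The open interior of a brick. -/
def inter (I : Brick ι) : Set (ι → ℝ) := {x | ∀ j, x j ∈ Set.Ioo (I.lower j) (I.upper j)}

/-- The volume of a brick. -/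
noncomputable def vol (I : Brick ι) : ℝ := ∏ j, (I.upper j - I.lower j)

end Brick

/-- A tagged division of a brick `I`: finitely many non-overlapping sub-bricks covering `I`,
each with a tag point belonging to it. -/
structure TaggedDiv {ι : Type*} [Fintype ι] (I : Brick ι) where
  pieces : Finset (Brick ι × (ι → ℝ))
  subset_of_mem : ∀ p ∈ pieces, (p.1 : Brick ι).toSet ⊆ I.toSet
  tag_mem : ∀ p ∈ pieces, p.2 ∈ (p.1 : Brick ι).toSet
  nonoverlap : ∀ p ∈ pieces, ∀ q ∈ pieces, p ≠ q →
    (p.1 : Brick ι).inter ∩ (q.1 : Brick ι).inter = ∅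
  cover : I.toSet = ⋃ p ∈ pieces, (p.1 : Brick ι).toSet

/-- A gauge on a brick: a function positive at each point of the brick. -/
def IsGauge (I : Brick ι) (δ : (ι → ℝ) → ℝ) : Prop := ∀ x ∈ I.toSet, 0 < δ x

/-- A tagged division is compatible with the gauge `δ` if each brick lies in the open ball
of radius `δ` about its tag. -/
def Compat {I : Brick ι} (D : TaggedDiv I) (δ : (ι → ℝ) → ℝ) : Prop :=
  ∀ p ∈ D.pieces, (p.1 : Brick ι).toSet ⊆ Metric.ball p.2 (δ p.2)

/-- The Riemann sum of `f` over a tagged division. -/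
noncomputable def riemannSum {I : Brick ι} (f : (ι → ℝ) → ℝ) (D : TaggedDiv I) : ℝ :=
  ∑ p ∈ D.pieces, f p.2 * (p.1 : Brick ι).vol

/-- `f` has Henstock–Kurzweil integral `A` on the brick `I`. -/
def HasHK (I : Brick ι) (f : (ι → ℝ) → ℝ) (A : ℝ) : Prop :=
  ∀ ε > 0, ∃ δ : (ι → ℝ) → ℝ, IsGauge I δ ∧
    ∀ D : TaggedDiv I, Compat D δ → |riemannSum f D - A| < ε

/-- Complex Riemann sum. -/
noncomputable def riemannSumC {I : Brick ι} (f : (ι → ℝ) → ℂ) (D : TaggedDiv I) : ℂ :=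
  ∑ p ∈ D.pieces, f p.2 * ((p.1 : Brick ι).vol : ℂ)

/-- `f` has complex Henstock–Kurzweil integral `A` on the brick `I`. -/
def HasHKC (I : Brick ι) (f : (ι → ℝ) → ℂ) (A : ℂ) : Prop :=
  ∀ ε > 0, ∃ δ : (ι → ℝ) → ℝ, IsGauge I δ ∧
    ∀ D : TaggedDiv I, Compat D δ → ‖riemannSumC f D - A‖ < ε

/-!
Keep the pieces of a partial division `Q` of a `δ`-fine division `D`, and replace every other
piece `J` of `D` by a `δ`-fine division of `J` whose Riemann sum is within `η / (#D + 1)` of `F J`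
(Cousin's lemma for the pointwise minimum of `δ` and a gauge for `J`). The result is a `δ`-fine
division of `I`, so `∑_Q f μ + ∑_{D \ Q} F - F I` has norm at most `ε + η`, for every `η > 0`.
For `Q = ∅` and arbitrary gauges this says that `F` is additive over divisions, which turns the
bound into `‖∑_Q (f μ - F)‖ ≤ ε`. Splitting the real and imaginary parts of the terms by sign
then gives the `4 ε` bound.
-/

open Finset

theorem Finset.sum_ite_mem_sub_sum {α M : Type*} [AddCommGroup M] [DecidableEq α]
    {s t : Finset α} (ht : t ⊆ s) (a b : α → M) :
    ∑ i ∈ s, (if i ∈ t then a i else b i) - ∑ i ∈ s, b i = ∑ i ∈ t, (a i - b i) := by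
  rw [← sum_sub_distrib]
  calc ∑ i ∈ s, ((if i ∈ t then a i else b i) - b i)
      = ∑ i ∈ t, ((if i ∈ t then a i else b i) - b i) :=
        (sum_subset ht fun i _ hi => by simp [hi]).symm
    _ = ∑ i ∈ t, (a i - b i) := sum_congr rfl fun i hi => by simp [hi]

theorem Finset.sum_abs_le_two_mul_of_forall_subset {α : Type*} {s : Finset α} {x : α → ℝ}
    {ε : ℝ} (h : ∀ t ⊆ s, |∑ i ∈ t, x i| ≤ ε) : ∑ i ∈ s, |x i| ≤ 2 * ε := by
  classical
  rw [← sum_filter_add_sum_filter_not s (fun i => 0 ≤ x i)]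
  have hpos : ∑ i ∈ s with 0 ≤ x i, |x i| ≤ ε := by
    rw [sum_congr rfl fun i hi => abs_of_nonneg (mem_filter.1 hi).2]
    exact (le_abs_self _).trans (h _ (filter_subset _ _))
  have hneg : ∑ i ∈ s with ¬ 0 ≤ x i, |x i| ≤ ε := by
    rw [sum_congr rfl fun i hi => abs_of_neg (not_le.1 (mem_filter.1 hi).2), sum_neg_distrib]
    exact (neg_le_abs _).trans (h _ (filter_subset _ _))
  linarith

theorem Finset.sum_norm_le_four_mul_of_forall_subset {α : Type*} {s : Finset α} {z : α → ℂ}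
    {ε : ℝ} (h : ∀ t ⊆ s, ‖∑ i ∈ t, z i‖ ≤ ε) : ∑ i ∈ s, ‖z i‖ ≤ 4 * ε := by
  have hre : ∑ i ∈ s, |(z i).re| ≤ 2 * ε := sum_abs_le_two_mul_of_forall_subset fun t ht => by
    simpa [Complex.re_sum] using (Complex.abs_re_le_norm _).trans (h t ht)
  have him : ∑ i ∈ s, |(z i).im| ≤ 2 * ε := sum_abs_le_two_mul_of_forall_subset fun t ht => by
    simpa [Complex.im_sum] using (Complex.abs_im_le_norm _).trans (h t ht)
  calc ∑ i ∈ s, ‖z i‖ ≤ ∑ i ∈ s, (|(z i).re| + |(z i).im|) :=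
        sum_le_sum fun i _ => Complex.norm_le_abs_re_add_abs_im _
    _ = ∑ i ∈ s, |(z i).re| + ∑ i ∈ s, |(z i).im| := sum_add_distrib
    _ ≤ 4 * ε := by linarith

namespace Brick

variable {J K J' K' : Brick ι}

lemma lower_mem_toSet (J : Brick ι) : J.lower ∈ J.toSet :=
  fun j => ⟨le_rfl, (J.lt j).le⟩

lemma upper_mem_toSet (J : Brick ι) : J.upper ∈ J.toSet :=
  fun j => ⟨(J.lt j).le, le_rfl⟩

lemma inter_mono (h : J.toSet ⊆ K.toSet) : J.inter ⊆ K.inter := fun _ hx j =>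
  ⟨(h J.lower_mem_toSet j).1.trans_lt (hx j).1, (hx j).2.trans_le (h J.upper_mem_toSet j).2⟩

lemma inter_nonempty (J : Brick ι) : J.inter.Nonempty :=
  ⟨fun j => (J.lower j + J.upper j) / 2, fun j => by constructor <;> linarith [J.lt j]⟩

lemma inter_inter_eq_empty_of_subset (h : J.inter ∩ K.inter = ∅) (hJ : J'.toSet ⊆ J.toSet)
    (hK : K'.toSet ⊆ K.toSet) : J'.inter ∩ K'.inter = ∅ :=
  Set.subset_eq_empty (Set.inter_subset_inter (inter_mono hJ) (inter_mono hK)) h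

lemma ne_of_inter_inter_eq_empty (h : J.inter ∩ K.inter = ∅) : J ≠ K := by
  rintro rfl
  exact J.inter_nonempty.ne_empty (by simpa using h)

def toBox (J : Brick ι) : BoxIntegral.Box ι := ⟨J.lower, J.upper, J.lt⟩

def ofBox (B : BoxIntegral.Box ι) : Brick ι := ⟨B.lower, B.upper, B.lower_lt_upper⟩

lemma toSet_eq_Icc (J : Brick ι) : J.toSet = Set.Icc J.lower J.upper := by
  ext
  simp [toSet, Pi.le_def, forall_and]

lemma toSet_toBox (J : Brick ι) : J.toSet = BoxIntegral.Box.Icc J.toBox :=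
  J.toSet_eq_Icc

lemma toSet_ofBox (B : BoxIntegral.Box ι) : (ofBox B).toSet = BoxIntegral.Box.Icc B :=
  (ofBox B).toSet_eq_Icc

lemma inter_ofBox_subset (B : BoxIntegral.Box ι) : (ofBox B).inter ⊆ B := fun _ hx =>
  (BoxIntegral.Box.mem_def _).2 fun j => ⟨(hx j).1, (hx j).2.le⟩

end Brick

lemma BoxIntegral.Box.closure_coe {κ : Type*} (B : BoxIntegral.Box κ) :
    closure (B : Set (κ → ℝ)) = BoxIntegral.Box.Icc B := by
  rw [BoxIntegral.Box.coe_eq_pi, closure_pi_set, BoxIntegral.Box.Icc_def, ← Set.pi_univ_Icc]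
  exact Set.pi_congr rfl fun i _ => closure_Ioc (B.lower_ne_upper i)

lemma BoxIntegral.Prepartition.IsPartition.iUnion_Icc_eq {κ : Type*} {B : BoxIntegral.Box κ}
    {π : BoxIntegral.Prepartition B} (h : π.IsPartition) :
    ⋃ B' ∈ π.boxes, BoxIntegral.Box.Icc B' = BoxIntegral.Box.Icc B := by
  simp_rw [← BoxIntegral.Box.closure_coe, ← Finset.closure_biUnion]
  rw [← BoxIntegral.Prepartition.iUnion_def', h.iUnion_eq]

lemma IsGauge.mono {I J : Brick ι} {g : (ι → ℝ) → ℝ} (hg : IsGauge I g)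
    (hJ : J.toSet ⊆ I.toSet) : IsGauge J g :=
  fun x hx => hg x (hJ hx)

lemma Compat.mono {I : Brick ι} {D : TaggedDiv I} {g g' : (ι → ℝ) → ℝ} (hD : Compat D g)
    (hg : ∀ x, g x ≤ g' x) : Compat D g' :=
  fun p hp => (hD p hp).trans (Metric.ball_subset_ball (hg p.2))

namespace TaggedDiv

open scoped Classical

variable {I : Brick ι}

noncomputable def ofTaggedPartition (J : Brick ι) (π : BoxIntegral.TaggedPrepartition J.toBox)
    (hπ : π.IsPartition) (hH : π.IsHenstock) : TaggedDiv J where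
  pieces := π.boxes.image fun B => (Brick.ofBox B, π.tag B)
  subset_of_mem := by
    simp only [Finset.mem_image, forall_exists_index, and_imp]
    rintro _ B hB rfl
    rw [Brick.toSet_ofBox, J.toSet_toBox]
    exact BoxIntegral.Box.le_iff_Icc.1 (π.le_of_mem' B hB)
  tag_mem := by
    simp only [Finset.mem_image, forall_exists_index, and_imp]
    rintro _ B hB rfl
    rw [Brick.toSet_ofBox]
    exact hH B hB
  nonoverlap := by
    simp only [Finset.mem_image, forall_exists_index, and_imp]
    rintro _ B hB rfl _ B' hB' rfl hne
    have hBB' : B ≠ B' := by rintro rfl; exact hne rfl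
    exact Set.subset_eq_empty (Set.inter_subset_inter (Brick.inter_ofBox_subset B)
      (Brick.inter_ofBox_subset B')) (π.disjoint_coe_of_mem hB hB' hBB').inter_eq
  cover := by
    rw [set_biUnion_finset_image, J.toSet_toBox, ← hπ.iUnion_Icc_eq]
    simp_rw [Brick.toSet_ofBox]

/-- **Cousin's lemma**. -/
theorem exists_compat (J : Brick ι) {g : (ι → ℝ) → ℝ} (hg : IsGauge J g) :
    ∃ D : TaggedDiv J, Compat D g := by
  -- Outside `J` the radius is irrelevant: only tags, which lie in `J`, are ever used.
  let r : (ι → ℝ) → Set.Ioi (0 : ℝ) := fun x =>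
    if h : 0 < g x then ⟨g x / 2, half_pos h⟩ else ⟨1, Set.mem_Ioi.2 one_pos⟩
  obtain ⟨π, hπ, hH, hr, -⟩ :=
    BoxIntegral.Box.exists_taggedPartition_isHenstock_isSubordinate_homothetic J.toBox r
  refine ⟨ofTaggedPartition J π hπ hH, ?_⟩
  intro p hp
  obtain ⟨B, hB, rfl⟩ := Finset.mem_image.1 hp
  have hpos : 0 < g (π.tag B) := hg _ (by
    rw [J.toSet_toBox]; exact BoxIntegral.Box.le_iff_Icc.1 (π.le_of_mem' B hB) (hH B hB))
  have hrB : (r (π.tag B) : ℝ) = g (π.tag B) / 2 := by simp [r, hpos]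
  rw [Brick.toSet_ofBox]
  exact (hr B hB).trans (Metric.closedBall_subset_ball (hrB ▸ half_lt_self hpos))

def single (J : Brick ι) (x : ι → ℝ) (hx : x ∈ J.toSet) : TaggedDiv J where
  pieces := {(J, x)}
  subset_of_mem := by simp
  tag_mem := by simpa using hx
  nonoverlap := by simp
  cover := by simp

instance (J : Brick ι) : Nonempty (TaggedDiv J) :=
  ⟨single J J.lower J.lower_mem_toSet⟩

lemma riemannSumC_single (f : (ι → ℝ) → ℂ) (J : Brick ι) (x : ι → ℝ) (hx : x ∈ J.toSet) :
    riemannSumC f (single J x hx) = f x * (J.vol : ℂ) := by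
  simp [riemannSumC, single]

lemma compat_single {J : Brick ι} {x : ι → ℝ} (hx : x ∈ J.toSet) {g : (ι → ℝ) → ℝ}
    (hJ : J.toSet ⊆ Metric.ball x (g x)) : Compat (single J x hx) g := by
  simpa [Compat, single] using hJ

noncomputable def biUnion (D : TaggedDiv I) (T : ∀ p : Brick ι × (ι → ℝ), TaggedDiv p.1) :
    TaggedDiv I where
  pieces := D.pieces.biUnion fun p => (T p).pieces
  subset_of_mem := by
    simp only [Finset.mem_biUnion, forall_exists_index, and_imp]
    exact fun a p hp ha => ((T p).subset_of_mem a ha).trans (D.subset_of_mem p hp)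
  tag_mem := by
    simp only [Finset.mem_biUnion, forall_exists_index, and_imp]
    exact fun a p _ ha => (T p).tag_mem a ha
  nonoverlap := by
    simp only [Finset.mem_biUnion, forall_exists_index, and_imp]
    intro a p hp ha b q hq hb hab
    by_cases hpq : p = q
    · subst hpq
      exact (T p).nonoverlap a ha b hb hab
    · exact Brick.inter_inter_eq_empty_of_subset (D.nonoverlap p hp q hq hpq)
        ((T p).subset_of_mem a ha) ((T q).subset_of_mem b hb)
  cover := by
    conv_lhs => rw [D.cover]
    simp_rw [set_biUnion_biUnion, ← (T _).cover]

lemma pairwiseDisjoint_pieces (D : TaggedDiv I) (T : ∀ p : Brick ι × (ι → ℝ), TaggedDiv p.1) :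
    (D.pieces : Set (Brick ι × (ι → ℝ))).PairwiseDisjoint fun p => (T p).pieces := by
  intro p hp q hq hpq
  refine disjoint_left.2 fun a hap haq => ?_
  exact Brick.ne_of_inter_inter_eq_empty (Brick.inter_inter_eq_empty_of_subset
    (D.nonoverlap p hp q hq hpq) ((T p).subset_of_mem a hap) ((T q).subset_of_mem a haq)) rfl

lemma riemannSumC_biUnion (f : (ι → ℝ) → ℂ) (D : TaggedDiv I)
    (T : ∀ p : Brick ι × (ι → ℝ), TaggedDiv p.1) :
    riemannSumC f (D.biUnion T) = ∑ p ∈ D.pieces, riemannSumC f (T p) :=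
  sum_biUnion (D.pairwiseDisjoint_pieces T)

lemma compat_biUnion {D : TaggedDiv I} {T : ∀ p : Brick ι × (ι → ℝ), TaggedDiv p.1}
    {g : (ι → ℝ) → ℝ} (hT : ∀ p ∈ D.pieces, Compat (T p) g) : Compat (D.biUnion T) g := by
  intro a ha
  obtain ⟨p, hp, hap⟩ := Finset.mem_biUnion.1 ha
  exact hT p hp a hap

end TaggedDiv

theorem HasHKC.exists_compat_norm_riemannSumC_sub_lt {J : Brick ι} {f : (ι → ℝ) → ℂ} {A : ℂ}
    (h : HasHKC J f A) {g : (ι → ℝ) → ℝ} (hg : IsGauge J g) {ε : ℝ} (hε : 0 < ε) :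
    ∃ D : TaggedDiv J, Compat D g ∧ ‖riemannSumC f D - A‖ < ε := by
  obtain ⟨δ, hδ, hclose⟩ := h ε hε
  obtain ⟨D, hD⟩ := TaggedDiv.exists_compat J (g := fun x => min (g x) (δ x))
    fun x hx => lt_min (hg x hx) (hδ x hx)
  exact ⟨D, hD.mono fun _ => min_le_left _ _, hclose D (hD.mono fun _ => min_le_right _ _)⟩

section SaksHenstock

open scoped Classical

variable {I : Brick ι} {f : (ι → ℝ) → ℂ} {F : Brick ι → ℂ} {g : (ι → ℝ) → ℝ} {ε : ℝ}

theorem norm_sum_ite_sub_le (hF : ∀ J : Brick ι, J.toSet ⊆ I.toSet → HasHKC J f (F J))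
    (hg : IsGauge I g) (hclose : ∀ D : TaggedDiv I, Compat D g → ‖riemannSumC f D - F I‖ < ε)
    (D : TaggedDiv I) {Q : Finset (Brick ι × (ι → ℝ))}
    (hQ : ∀ p ∈ Q, p.1.toSet ⊆ Metric.ball p.2 (g p.2)) :
    ‖∑ p ∈ D.pieces, (if p ∈ Q then f p.2 * (p.1.vol : ℂ) else F p.1) - F I‖ ≤ ε := by
  set c : Brick ι × (ι → ℝ) → ℂ := fun p => if p ∈ Q then f p.2 * (p.1.vol : ℂ) else F p.1
  refine le_of_forall_pos_lt_add fun η hη => ?_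
  set ε' := η / (#D.pieces + 1)
  have hε' : 0 < ε' := by positivity
  have hT : ∀ p : Brick ι × (ι → ℝ), ∃ T : TaggedDiv p.1,
      p ∈ D.pieces → Compat T g ∧ ‖riemannSumC f T - c p‖ < ε' := by
    intro p
    by_cases hpD : p ∈ D.pieces
    · by_cases hpQ : p ∈ Q
      · refine ⟨.single p.1 p.2 (D.tag_mem p hpD), fun _ =>
          ⟨TaggedDiv.compat_single _ (hQ p hpQ), ?_⟩⟩
        simpa [c, hpQ, TaggedDiv.riemannSumC_single] using hε'
      · have hpI := D.subset_of_mem p hpD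
        obtain ⟨T, hTg, hTF⟩ :=
          (hF p.1 hpI).exists_compat_norm_riemannSumC_sub_lt (hg.mono hpI) hε'
        exact ⟨T, fun _ => ⟨hTg, by simpa [c, hpQ] using hTF⟩⟩
    · exact ⟨Classical.arbitrary _, fun h => absurd h hpD⟩
  choose T hT using hT
  have herr : ∑ p ∈ D.pieces, ‖riemannSumC f (T p) - c p‖ < η :=
    calc ∑ p ∈ D.pieces, ‖riemannSumC f (T p) - c p‖ ≤ #D.pieces * ε' := by
          simpa using sum_le_card_nsmul _ _ _ fun p hp => (hT p hp).2.le
      _ < η := by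
          rw [← mul_div_assoc, div_lt_iff₀ (by positivity)]
          linarith
  calc ‖∑ p ∈ D.pieces, c p - F I‖
      = ‖(riemannSumC f (D.biUnion T) - F I) - ∑ p ∈ D.pieces, (riemannSumC f (T p) - c p)‖ := by
        rw [TaggedDiv.riemannSumC_biUnion, sum_sub_distrib]; ring_nf
    _ ≤ ‖riemannSumC f (D.biUnion T) - F I‖ + ∑ p ∈ D.pieces, ‖riemannSumC f (T p) - c p‖ :=
        (norm_sub_le _ _).trans (add_le_add_right (norm_sum_le _ _) _)
    _ < ε + η :=
        add_lt_add (hclose _ (TaggedDiv.compat_biUnion fun p hp => (hT p hp).1)) herr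

theorem sum_pieces_eq_of_hasHKC (hF : ∀ J : Brick ι, J.toSet ⊆ I.toSet → HasHKC J f (F J))
    (D : TaggedDiv I) : ∑ p ∈ D.pieces, F p.1 = F I := by
  refine eq_of_forall_dist_le fun η hη => ?_
  obtain ⟨g, hg, hclose⟩ := hF I subset_rfl η hη
  simpa [dist_eq_norm] using norm_sum_ite_sub_le hF hg hclose D (Q := ∅) (by simp)

end SaksHenstock

theorem henstock_lemma_general (I : Brick ι) (f : (ι → ℝ) → ℂ) (F : Brick ι → ℂ)
    (hF : ∀ J : Brick ι, J.toSet ⊆ I.toSet → HasHKC J f (F J))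
    (ε : ℝ) (δ : (ι → ℝ) → ℝ) (hδ : IsGauge I δ)
    (hclose : ∀ D : TaggedDiv I, Compat D δ → ‖riemannSumC f D - F I‖ < ε) :
    ∀ D : TaggedDiv I, Compat D δ →
      (∀ Q ⊆ D.pieces,
        ‖∑ p ∈ Q, (f p.2 * ((p.1 : Brick ι).vol : ℂ) - F p.1)‖ ≤ ε) ∧
      ∑ p ∈ D.pieces, ‖f p.2 * ((p.1 : Brick ι).vol : ℂ) - F p.1‖ ≤ 4 * ε := by
  classical
  intro D hD
  have hpartial : ∀ Q ⊆ D.pieces,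
      ‖∑ p ∈ Q, (f p.2 * ((p.1 : Brick ι).vol : ℂ) - F p.1)‖ ≤ ε := fun Q hQ => by
    rw [← sum_ite_mem_sub_sum hQ, sum_pieces_eq_of_hasHKC hF D]
    exact norm_sum_ite_sub_le hF hδ hclose D fun p hp => hD p (hQ hp)
  exact ⟨hpartial, sum_norm_le_four_mul_of_forall_subset hpartial⟩

/-- **Henstock's lemma (Saks–Henstock).** If `f` is HK-integrable with indefinite integral `F`
and `δ` is a gauge making all Riemann sums over `I` `ε`-close to `F I`, then every partial
division satisfies `|∑ (f(P)μ(J) − F(J))| ≤ ε`, and the full division satisfies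
`∑ |f(P)μ(J) − F(J)| ≤ 4ε`. -/
theorem henstock_lemma (I : Brick ι) (f : (ι → ℝ) → ℂ) (F : Brick ι → ℂ)
    (hF : ∀ J : Brick ι, J.toSet ⊆ I.toSet → HasHKC J f (F J))
    (ε : ℝ) (hε : 0 < ε) (δ : (ι → ℝ) → ℝ) (hδ : IsGauge I δ)
    (hclose : ∀ D : TaggedDiv I, Compat D δ → ‖riemannSumC f D - F I‖ < ε) :
    ∀ D : TaggedDiv I, Compat D δ →
      (∀ Q ⊆ D.pieces,
        ‖∑ p ∈ Q, (f p.2 * ((p.1 : Brick ι).vol : ℂ) - F p.1)‖ ≤ ε) ∧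
      ∑ p ∈ D.pieces, ‖f p.2 * ((p.1 : Brick ι).vol : ℂ) - F p.1‖ ≤ 4 * ε :=
  henstock_lemma_general I f F hF ε δ hδ hclose
end

section
/- The variation is countably subadditive: if X = ⋃_{j=1}^∞ Xⱼ then V(h; I; X) ≤ ∑_{j=1}^∞ V(h; I; Xⱼ), where V(h; I; X) is the variation of h restricted to tags in X. -/
open Set Filter

variable {ι : Type*} [Fintype ι]

open scoped ENNReal Classical

/-- The sum of `|h|` over a tagged division, for an interval-point function `h`. -/
noncomputable def varSum {I : Brick ι} (h : Brick ι → (ι → ℝ) → ℝ) (D : TaggedDiv I) : ℝ :=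
  ∑ p ∈ D.pieces, |h p.1 p.2|

/-- The (Henstock) variation of an interval-point function `h` on a brick `I`. -/
noncomputable def variation (I : Brick ι) (h : Brick ι → (ι → ℝ) → ℝ) : ℝ≥0∞ :=
  ⨅ δ ∈ {δ : (ι → ℝ) → ℝ | IsGauge I δ},
    ⨆ D ∈ {D : TaggedDiv I | Compat D δ}, ENNReal.ofReal (varSum h D)

/-- The variation of `h` on `I` with tags restricted to the set `X`. -/
noncomputable def variationOn (I : Brick ι) (h : Brick ι → (ι → ℝ) → ℝ)
    (X : Set (ι → ℝ)) : ℝ≥0∞ :=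
  variation I (fun J P => if P ∈ X then h J P else 0)

/-- The outer measure of a set `X` in the brick `I`, defined via the Henstock variation of
the volume function restricted to `X`. -/
noncomputable def mustar (I : Brick ι) (X : Set (ι → ℝ)) : ℝ≥0∞ :=
  variationOn I (fun J _ => J.vol) X


section Aux
variable {ι : Type*} [Fintype ι]
open BoxIntegral

/-- Convert a box to a brick. -/
def boxToBrick (K : Box ι) : Brick ι := ⟨K.lower, K.upper, K.lower_lt_upper⟩

lemma boxToBrick_toSet (K : Box ι) : (boxToBrick K).toSet = Box.Icc K := by
  ext x
  simp [Brick.toSet, boxToBrick, Box.Icc_def, Pi.le_def, forall_and]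

lemma boxToBrick_inj {K K' : Box ι} (h : boxToBrick K = boxToBrick K') : K = K' := by
  have h1 : K.lower = K'.lower := congrArg Brick.lower h
  have h2 : K.upper = K'.upper := congrArg Brick.upper h
  cases K; cases K'; simp_all

lemma Box.closure_coe (B : Box ι) : closure (↑B : Set (ι → ℝ)) = Box.Icc B := by
  rw [Box.coe_eq_pi, closure_pi_set, Box.Icc_eq_pi]
  exact Set.pi_congr rfl fun i _ => closure_Ioc (B.lower_ne_upper i)

lemma Brick.inter_subset_toSet (K : Brick ι) : K.inter ⊆ K.toSet :=
  fun x hx j => ⟨(hx j).1.le, (hx j).2.le⟩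

lemma Brick.inter_mono_s9 {K J : Brick ι} (h : K.toSet ⊆ J.toSet) : K.inter ⊆ J.inter := by
  have hl : K.lower ∈ K.toSet := fun j => ⟨le_refl _, (K.lt j).le⟩
  have hu : K.upper ∈ K.toSet := fun j => ⟨(K.lt j).le, le_refl _⟩
  intro x hx j
  exact ⟨lt_of_le_of_lt (h hl j).1 (hx j).1, lt_of_lt_of_le (hx j).2 (h hu j).2⟩

/-- Cousin's lemma: every brick admits a tagged division compatible with a given gauge. -/
lemma exists_compat_div (J : Brick ι) (δ : (ι → ℝ) → ℝ) (hδ : IsGauge J δ) :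
    ∃ D : TaggedDiv J, Compat D δ := by
  classical
  set B : Box ι := ⟨J.lower, J.upper, J.lt⟩ with hB
  have hIcc : Box.Icc B = J.toSet := (boxToBrick_toSet B).symm
  set r : (ι → ℝ) → Set.Ioi (0:ℝ) :=
    fun x => if h : 0 < δ x then ⟨δ x / 2, by simp; linarith⟩ else ⟨1, by simp⟩ with hr
  obtain ⟨π, hpart, hHen, hsub, -, -⟩ :=
    Box.exists_taggedPartition_isHenstock_isSubordinate_homothetic B r
  refine ⟨⟨π.boxes.image (fun K => (boxToBrick K, π.tag K)), ?_, ?_, ?_, ?_⟩, ?_⟩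
  · rintro p hp
    obtain ⟨K, hK, rfl⟩ := Finset.mem_image.1 hp
    rw [boxToBrick_toSet]
    rw [← hIcc]
    exact Box.le_iff_Icc.1 (π.le_of_mem' K hK)
  · rintro p hp
    obtain ⟨K, hK, rfl⟩ := Finset.mem_image.1 hp
    rw [boxToBrick_toSet]
    exact hHen K hK
  · rintro p hp q hq hne
    obtain ⟨K, hK, rfl⟩ := Finset.mem_image.1 hp
    obtain ⟨K', hK', rfl⟩ := Finset.mem_image.1 hq
    have hKK' : K ≠ K' := by
      rintro rfl; exact hne rfl
    have hdisj : Disjoint (↑K : Set (ι → ℝ)) ↑K' :=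
      π.toPrepartition.pairwiseDisjoint hK hK' hKK'
    apply Set.eq_empty_of_subset_empty
    intro x hx
    have h1 : x ∈ (↑K : Set (ι → ℝ)) := by
      have := (Brick.inter_subset_toSet _ hx.1)
      intro i
      exact ⟨(hx.1 i).1, (hx.1 i).2.le⟩
    have h2 : x ∈ (↑K' : Set (ι → ℝ)) := fun i => ⟨(hx.2 i).1, (hx.2 i).2.le⟩
    exact hdisj.le_bot ⟨h1, h2⟩
  · -- cover
    apply Set.Subset.antisymm
    · rw [← hIcc, ← Box.closure_coe]
      apply closure_minimal
      · intro x hx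
        obtain ⟨K, hK, hxK⟩ := hpart x hx
        refine Set.mem_biUnion (Finset.mem_image.2 ⟨K, hK, rfl⟩) ?_
        rw [boxToBrick_toSet]
        exact Box.coe_subset_Icc hxK
      · apply Set.Finite.isClosed_biUnion (Finset.finite_toSet _)
        rintro p hp
        obtain ⟨K, hK, rfl⟩ := Finset.mem_image.1 hp
        rw [boxToBrick_toSet, Box.Icc_def]
        exact isClosed_Icc
    · apply Set.iUnion₂_subset
      rintro p hp
      obtain ⟨K, hK, rfl⟩ := Finset.mem_image.1 hp
      rw [boxToBrick_toSet, ← hIcc]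
      exact Box.le_iff_Icc.1 (π.le_of_mem' K hK)
  · -- Compat
    rintro p hp
    obtain ⟨K, hK, rfl⟩ := Finset.mem_image.1 hp
    have htag : π.tag K ∈ J.toSet := by rw [← hIcc]; exact π.tag_mem_Icc K
    have hpos : 0 < δ (π.tag K) := hδ _ htag
    have hsub' := hsub K hK
    rw [boxToBrick_toSet]
    refine hsub'.trans ?_
    have : (r (π.tag K) : ℝ) = δ (π.tag K) / 2 := by rw [hr]; simp [hpos]
    rw [this]
    exact Metric.closedBall_subset_ball (by linarith)

end Aux

section Crux
variable {ι : Type*} [Fintype ι]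

instance instNonemptyTaggedDiv (J : Brick ι) : Nonempty (TaggedDiv J) :=
  ⟨{ pieces := {(J, J.lower)}
     subset_of_mem := by rintro p hp; simp only [Finset.mem_singleton] at hp; subst hp; exact subset_rfl
     tag_mem := by
       rintro p hp; simp only [Finset.mem_singleton] at hp; subst hp
       exact fun j => ⟨le_refl _, (J.lt j).le⟩
     nonoverlap := by
       rintro p hp q hq hne
       simp only [Finset.mem_singleton] at hp hq
       subst hp; subst hq; exact absurd rfl hne
     cover := by simp }⟩

lemma partial_sum_le (I : Brick ι) (h : Brick ι → (ι → ℝ) → ℝ) (Xj : Set (ι → ℝ))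
    (δ δj : (ι → ℝ) → ℝ) (hgj : IsGauge I δj)
    (D : TaggedDiv I) (hD : Compat D δ) (S : Finset (Brick ι × (ι → ℝ)))
    (hS : S ⊆ D.pieces) (hStag : ∀ p ∈ S, p.2 ∈ Xj)
    (hδle : ∀ p ∈ S, δ p.2 ≤ δj p.2) :
    ENNReal.ofReal (∑ p ∈ S, |h p.1 p.2|) ≤
      ⨆ D' ∈ {D' : TaggedDiv I | Compat D' δj},
        ENNReal.ofReal (varSum (fun J P => if P ∈ Xj then h J P else 0) D') := by
  classical
  have hex : ∀ p : Brick ι × (ι → ℝ), p ∈ D.pieces → ∃ Dp : TaggedDiv p.1, Compat Dp δj :=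
    fun p hp => exists_compat_div p.1 δj (fun x hx => hgj x (D.subset_of_mem p hp hx))
  choose! Dp hDp using hex
  classical
  set branch : Brick ι × (ι → ℝ) → Finset (Brick ι × (ι → ℝ)) :=
    fun p => if p ∈ S then {p} else (Dp p).pieces with hbr
  have hsub : ∀ p, ∀ q ∈ branch p, q.1.toSet ⊆ p.1.toSet := by
    intro p q hq
    by_cases hy : p ∈ S
    · simp only [hbr, if_pos hy, Finset.mem_singleton] at hq; subst hq; exact subset_rfl
    · simp only [hbr, if_neg hy] at hq; exact (Dp p).subset_of_mem q hq
  have htag : ∀ p ∈ D.pieces, ∀ q ∈ branch p, q.2 ∈ q.1.toSet := by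
    intro p hp q hq
    by_cases hy : p ∈ S
    · simp only [hbr, if_pos hy, Finset.mem_singleton] at hq; rw [hq]; exact D.tag_mem p hp
    · simp only [hbr, if_neg hy] at hq; exact (Dp p).tag_mem q hq
  set D' : TaggedDiv I := {
    pieces := D.pieces.biUnion branch
    subset_of_mem := by
      intro q hq
      obtain ⟨p, hp, hqp⟩ := Finset.mem_biUnion.1 hq
      exact (hsub p q hqp).trans (D.subset_of_mem p hp)
    tag_mem := by
      intro q hq
      obtain ⟨p, hp, hqp⟩ := Finset.mem_biUnion.1 hq
      exact htag p hp q hqp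
    nonoverlap := by
      intro q hq q' hq' hne
      obtain ⟨p, hp, hqp⟩ := Finset.mem_biUnion.1 hq
      obtain ⟨p', hp', hqp'⟩ := Finset.mem_biUnion.1 hq'
      by_cases hpp : p = p'
      · subst hpp
        by_cases hy : p ∈ S
        · simp only [hbr, if_pos hy, Finset.mem_singleton] at hqp hqp'
          subst hqp; subst hqp'; exact absurd rfl hne
        · simp only [hbr, if_neg hy] at hqp hqp'
          exact (Dp p).nonoverlap q hqp q' hqp' hne
      · apply Set.eq_empty_of_subset_empty
        calc q.1.inter ∩ q'.1.inter
            ⊆ p.1.inter ∩ p'.1.inter :=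
              Set.inter_subset_inter (Brick.inter_mono_s9 (hsub p q hqp))
                (Brick.inter_mono_s9 (hsub p' q' hqp'))
          _ = ∅ := D.nonoverlap p hp p' hp' hpp
    cover := by
      rw [Finset.set_biUnion_biUnion]
      rw [D.cover]
      apply Set.iUnion₂_congr
      intro p hp
      by_cases hy : p ∈ S
      · simp [hbr, if_pos hy]
      · simp only [hbr, if_neg hy]
        exact (Dp p).cover }
  have hcompat : Compat D' δj := by
    intro q hq
    obtain ⟨p, hp, hqp⟩ := Finset.mem_biUnion.1 hq
    by_cases hy : p ∈ S
    · simp only [hbr, if_pos hy, Finset.mem_singleton] at hqp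
      subst hqp
      exact (hD q hp).trans (Metric.ball_subset_ball (hδle _ hy))
    · simp only [hbr, if_neg hy] at hqp
      exact hDp p hp q hqp
  refine le_trans ?_ (le_iSup₂ (f := fun (D' : TaggedDiv I) (_ : D' ∈ {D' : TaggedDiv I | Compat D' δj}) =>
    ENNReal.ofReal (varSum (fun J P => if P ∈ Xj then h J P else 0) D')) D' hcompat)
  apply ENNReal.ofReal_le_ofReal
  have hsubset : S ⊆ D'.pieces := by
    intro p hp
    exact Finset.mem_biUnion.2 ⟨p, hS hp, by simp [hbr, if_pos hp]⟩
  calc ∑ p ∈ S, |h p.1 p.2|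
      = ∑ p ∈ S, |if p.2 ∈ Xj then h p.1 p.2 else 0| := by
        apply Finset.sum_congr rfl
        intro p hp
        rw [if_pos (hStag p hp)]
    _ ≤ varSum (fun J P => if P ∈ Xj then h J P else 0) D' :=
        Finset.sum_le_sum_of_subset_of_nonneg hsubset (fun _ _ _ => abs_nonneg _)

end Crux

section Main
variable {ι : Type*} [Fintype ι]

theorem variation_countably_subadditive' (I : Brick ι)
    (h : Brick ι → (ι → ℝ) → ℝ) (X : ℕ → Set (ι → ℝ)) :
    variationOn I h (⋃ j, X j) ≤ ∑' j, variationOn I h (X j) := by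
  classical
  by_cases htop : ∑' j, variationOn I h (X j) = ⊤
  · rw [htop]; exact le_top
  have hfin : ∀ j, variationOn I h (X j) ≠ ⊤ :=
    fun j => ne_top_of_le_ne_top htop (ENNReal.le_tsum j)
  refine ENNReal.le_of_forall_pos_le_add ?_
  intro ε hε _
  set εE : ℕ → ℝ≥0∞ := fun j => (ε : ℝ≥0∞) * 2⁻¹ ^ (j + 1) with hεE
  have h2pos : (0 : ℝ≥0∞) < 2⁻¹ := ENNReal.inv_pos.2 ENNReal.ofNat_ne_top
  have hεpos : ∀ j, εE j ≠ 0 := fun j =>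
    (ENNReal.mul_pos (ENNReal.coe_pos.2 hε).ne' (pow_ne_zero _ h2pos.ne')).ne'
  have hεsum : ∑' j, εE j = (ε : ℝ≥0∞) := by
    rw [hεE]
    simp only [ENNReal.tsum_mul_left]
    have h21 : ∑' (j : ℕ), (2⁻¹ : ℝ≥0∞) ^ (j + 1) = 2⁻¹ * ∑' (j : ℕ), (2⁻¹ : ℝ≥0∞) ^ j := by
      rw [← ENNReal.tsum_mul_left]
      congr 1; ext j; rw [pow_succ, mul_comm]
    rw [h21, ENNReal.tsum_geometric, ENNReal.one_sub_inv_two, inv_inv,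
      ENNReal.inv_mul_cancel two_ne_zero ENNReal.ofNat_ne_top, mul_one]
  have hchoice : ∀ j, ∃ δj : (ι → ℝ) → ℝ, IsGauge I δj ∧
      (⨆ D ∈ {D : TaggedDiv I | Compat D δj},
        ENNReal.ofReal (varSum (fun J P => if P ∈ X j then h J P else 0) D)) ≤
      variationOn I h (X j) + εE j := by
    intro j
    have h1 : variationOn I h (X j) < variationOn I h (X j) + εE j :=
      ENNReal.lt_add_right (hfin j) (hεpos j)
    nth_rewrite 1 [variationOn, variation] at h1
    simp only [iInf_lt_iff] at h1
    obtain ⟨δj, hg, hlt'⟩ := h1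
    exact ⟨δj, hg, hlt'.le⟩
  choose δs hδs1 hδs2 using hchoice
  set δ0 : (ι → ℝ) → ℝ := fun x => if hx : ∃ j, x ∈ X j then δs (Nat.find hx) x else 1 with hδ0
  have hg0 : IsGauge I δ0 := by
    intro x hx
    show 0 < if hx : ∃ j, x ∈ X j then δs (Nat.find hx) x else 1
    by_cases hx' : ∃ j, x ∈ X j
    · rw [dif_pos hx']; exact hδs1 _ x hx
    · rw [dif_neg hx']; exact one_pos
  have key : ∀ D : TaggedDiv I, Compat D δ0 →
      ENNReal.ofReal (varSum (fun J P => if P ∈ ⋃ j, X j then h J P else 0) D) ≤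
        (∑' j, variationOn I h (X j)) + ε := by
    intro D hD
    set g : Brick ι × (ι → ℝ) → ℕ :=
      fun p => if hx : ∃ j, p.2 ∈ X j then Nat.find hx else 0 with hg
    set F : Finset (Brick ι × (ι → ℝ)) := D.pieces.filter (fun p => ∃ j, p.2 ∈ X j) with hF
    set T : Finset ℕ := F.image g with hT
    have step0 : ∑ p ∈ F, |if p.2 ∈ ⋃ j, X j then h p.1 p.2 else 0| =
        varSum (fun J P => if P ∈ ⋃ j, X j then h J P else 0) D := by
      apply Finset.sum_filter_of_ne
      intro p _ hne
      by_contra hc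
      rw [if_neg (fun hmem => hc (Set.mem_iUnion.1 hmem))] at hne
      exact hne (abs_zero)
    have step1 : varSum (fun J P => if P ∈ ⋃ j, X j then h J P else 0) D =
        ∑ p ∈ F, |h p.1 p.2| := by
      rw [← step0]
      apply Finset.sum_congr rfl
      intro p hp
      rw [if_pos (Set.mem_iUnion.2 (Finset.mem_filter.1 hp).2)]
    have step2 : ∑ p ∈ F, |h p.1 p.2| =
        ∑ j ∈ T, ∑ p ∈ F.filter (fun p => g p = j), |h p.1 p.2| :=
      (Finset.sum_fiberwise_of_maps_to (fun p hp => Finset.mem_image_of_mem g hp) _).symm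
    calc ENNReal.ofReal (varSum (fun J P => if P ∈ ⋃ j, X j then h J P else 0) D)
        = ∑ j ∈ T, ENNReal.ofReal (∑ p ∈ F.filter (fun p => g p = j), |h p.1 p.2|) := by
          rw [step1, step2]
          exact ENNReal.ofReal_sum_of_nonneg
            (fun j _ => Finset.sum_nonneg fun p _ => abs_nonneg _)
      _ ≤ ∑ j ∈ T, (variationOn I h (X j) + εE j) := by
          apply Finset.sum_le_sum
          intro j _
          refine le_trans (partial_sum_le I h (X j) δ0 (δs j) (hδs1 j) D hD
            (F.filter (fun p => g p = j)) ?_ ?_ ?_) (hδs2 j)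
          · exact (Finset.filter_subset _ _).trans (Finset.filter_subset _ _)
          · intro p hp
            obtain ⟨hpF, hgp⟩ := Finset.mem_filter.1 hp
            obtain ⟨-, hx⟩ := Finset.mem_filter.1 hpF
            have : Nat.find hx = j := by
              have := hgp
              simp only [hg] at this
              rwa [dif_pos hx] at this
            rw [← this]
            exact Nat.find_spec hx
          · intro p hp
            obtain ⟨hpF, hgp⟩ := Finset.mem_filter.1 hp
            obtain ⟨-, hx⟩ := Finset.mem_filter.1 hpF
            have hfind : Nat.find hx = j := by
              have := hgp
              simp only [hg] at this
              rwa [dif_pos hx] at this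
            have : δ0 p.2 = δs j p.2 := by
              show (if hx : ∃ j, p.2 ∈ X j then δs (Nat.find hx) p.2 else 1) = δs j p.2
              rw [dif_pos hx, hfind]
            rw [this]
      _ ≤ ∑' j, (variationOn I h (X j) + εE j) := ENNReal.sum_le_tsum T
      _ = (∑' j, variationOn I h (X j)) + ε := by rw [ENNReal.tsum_add, hεsum]
  calc variationOn I h (⋃ j, X j)
      ≤ ⨆ D ∈ {D : TaggedDiv I | Compat D δ0},
          ENNReal.ofReal (varSum (fun J P => if P ∈ ⋃ j, X j then h J P else 0) D) := by
        rw [variationOn, variation]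
        exact iInf₂_le δ0 hg0
    _ ≤ (∑' j, variationOn I h (X j)) + ε := iSup₂_le key

end Main

/-- The Henstock variation is countably subadditive in the tag-restriction set. -/
theorem variation_countably_subadditive (I : Brick ι)
    (h : Brick ι → (ι → ℝ) → ℝ) (X : ℕ → Set (ι → ℝ)) :
    variationOn I h (⋃ j, X j) ≤ ∑' j, variationOn I h (X j) :=
  variation_countably_subadditive' I h X
end
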